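/- For all real numbers A ≤ B, every t ∈ ℝ, and every real c ≥ 0, there exist constants C > 0, N ∈ ℕ, and T > 0 such that for all s ∈ ℂ with A ≤ Re(s) ≤ B and |Im(s)| ≥ T one has |Γ((1 − s − it + c)/2)| ≤ C · (1 + |s|)^N · |Γ((s + it + c)/2)|, where Γ is the complex Gamma function and i = √−1. (This is the key estimate in the proof of Lemma 3.1 (lem:gamma:poly): the quotient Γ((1−s−it+c)/2)/Γ((s+it+c)/2) is bounded by a polynomial in s on vertical strips, for Im(s) sufficiently large.) -/

import Mathlib

/-!
Since `Γ (conj w) = conj (Γ w)`, the left-hand side is `‖Γ (z + δ)‖` with `z = (s + it + c)/2` and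
the real shift `δ = 1/2 - Re s`, which stays bounded on the strip. Shifting the argument of `Γ`
by `k ∈ ℕ` multiplies `‖Γ‖` by `∏_{j<k} ‖z + j‖`, which lies in `[1, (‖z‖ + k)^k]` once
`|Im z| ≥ 1`; and for `Re u ≥ 2` a real shift `r ≥ 0` cannot decrease `‖Γ u‖`, because
`‖B(u, r)‖ ≤ B(Re u, r) = Γ(Re u) Γ(r) / Γ(Re u + r) ≤ Γ(r)`. Shifting `z + δ` up by an integer
and then by a real amount to `z + m` for a fixed `m ∈ ℕ`, and comparing `Γ (z + m)` with `Γ z`,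
gives the polynomial bound.
-/

open Complex ComplexConjugate

namespace Complex

theorem norm_ofReal_cpow_le {x : ℝ} (hx : 0 ≤ x) (w : ℂ) : ‖(x : ℂ) ^ w‖ ≤ x ^ w.re := by
  simpa [arg_ofReal_of_nonneg hx, abs_of_nonneg hx] using norm_cpow_le (x : ℂ) w

theorem norm_betaIntegral_le {u v : ℂ} (hu : 0 < u.re) (hv : 0 < v.re) :
    ‖betaIntegral u v‖ ≤ ‖betaIntegral u.re v.re‖ := by
  set g : ℝ → ℝ := fun x ↦ x ^ (u.re - 1) * (1 - x) ^ (v.re - 1)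
  have hg : Set.EqOn (fun x : ℝ ↦ (x : ℂ) ^ ((u.re : ℂ) - 1) * (1 - (x : ℂ)) ^ ((v.re : ℂ) - 1))
      (fun x ↦ (g x : ℂ)) (Set.Icc 0 1) := by
    rintro x ⟨hx0, hx1⟩
    simp only [g, ofReal_mul, ofReal_cpow hx0, ofReal_cpow (sub_nonneg.2 hx1)]
    push_cast; ring_nf
  have hg_nonneg : ∀ x ∈ Set.Icc (0 : ℝ) 1, 0 ≤ g x := fun x ⟨hx0, hx1⟩ ↦
    mul_nonneg (Real.rpow_nonneg hx0 _) (Real.rpow_nonneg (sub_nonneg.2 hx1) _)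
  have hg_int : IntervalIntegrable g MeasureTheory.volume 0 1 := by
    refine (betaIntegral_convergent (u := u.re) (v := v.re) (by simpa) (by simpa)).norm.congr ?_
    intro x hx
    rw [Set.uIoc_of_le zero_le_one] at hx
    have hx' := Set.Ioc_subset_Icc_self hx
    simp only [hg hx', norm_real, Real.norm_eq_abs, abs_of_nonneg (hg_nonneg x hx')]
  have hreal : betaIntegral u.re v.re = ((∫ x in (0 : ℝ)..1, g x : ℝ) : ℂ) := by
    rw [betaIntegral, ← intervalIntegral.integral_ofReal]
    exact intervalIntegral.integral_congr (by rwa [Set.uIcc_of_le zero_le_one])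
  rw [hreal, norm_real, Real.norm_eq_abs]
  refine (intervalIntegral.norm_integral_le_of_norm_le zero_le_one
    (Filter.Eventually.of_forall fun x hx ↦ ?_) hg_int).trans (le_abs_self _)
  rw [norm_mul, ← ofReal_one, ← ofReal_sub]
  exact mul_le_mul (by simpa using norm_ofReal_cpow_le hx.1.le (u - 1))
    (by simpa using norm_ofReal_cpow_le (sub_nonneg.2 hx.2) (v - 1)) (norm_nonneg _)
    (Real.rpow_nonneg hx.1.le _)

theorem norm_betaIntegral_ofReal_le_Gamma {x r : ℝ} (hx : 2 ≤ x) (hr : 0 < r) :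
    ‖betaIntegral x r‖ ≤ Real.Gamma r := by
  have hxr : 0 < Real.Gamma (x + r) := Real.Gamma_pos_of_pos (by linarith)
  have hmono : Real.Gamma x ≤ Real.Gamma (x + r) :=
    Real.Gamma_strictMonoOn_Ici.monotoneOn hx (by simp only [Set.mem_Ici]; linarith)
      (by linarith)
  rw [betaIntegral_eq_Gamma_mul_div _ _ (by rw [ofReal_re]; linarith) (by simpa), ← ofReal_add,
    Gamma_ofReal, Gamma_ofReal, Gamma_ofReal, ← ofReal_mul, ← ofReal_div, norm_real,
    Real.norm_of_nonneg (by positivity), div_le_iff₀ hxr, mul_comm]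
  exact mul_le_mul_of_nonneg_left hmono (Real.Gamma_pos_of_pos hr).le

theorem norm_Gamma_le_norm_Gamma_add_ofReal {u : ℂ} (hu : 2 ≤ u.re) {r : ℝ} (hr : 0 ≤ r) :
    ‖Gamma u‖ ≤ ‖Gamma (u + r)‖ := by
  rcases hr.eq_or_lt with rfl | hr
  · simp
  have hbeta : ‖Gamma u‖ * Real.Gamma r = ‖Gamma (u + r)‖ * ‖betaIntegral u r‖ := by
    rw [← Real.norm_of_nonneg (Real.Gamma_pos_of_pos hr).le, ← norm_real, ← Gamma_ofReal,
      ← norm_mul, ← norm_mul, Gamma_mul_Gamma_eq_betaIntegral (by linarith) (by simpa)]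
  have hle : ‖betaIntegral u r‖ ≤ Real.Gamma r :=
    (norm_betaIntegral_le (by linarith) (by simpa)).trans
      (by simpa using norm_betaIntegral_ofReal_le_Gamma hu hr)
  refine le_of_mul_le_mul_right ?_ (Real.Gamma_pos_of_pos hr)
  rw [hbeta]
  exact mul_le_mul_of_nonneg_left hle (norm_nonneg _)

theorem norm_Gamma_add_nat {z : ℂ} (hz : ∀ m : ℕ, z ≠ -m) (n : ℕ) :
    ‖Gamma (z + n)‖ = (∏ j ∈ Finset.range n, ‖z + j‖) * ‖Gamma z‖ := by
  induction n with
  | zero => simp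
  | succ n ih =>
    have hzn : z + n ≠ 0 := fun h ↦ hz n (eq_neg_of_add_eq_zero_left h)
    rw [Nat.cast_succ, ← add_assoc, Gamma_add_one _ hzn, norm_mul, ih, Finset.prod_range_succ]
    ring

theorem norm_Gamma_le_norm_Gamma_add_nat {z : ℂ} (hz : 1 ≤ |z.im|) (n : ℕ) :
    ‖Gamma z‖ ≤ ‖Gamma (z + n)‖ := by
  have hz' : ∀ m : ℕ, z ≠ -m := fun m h ↦ by norm_num [h] at hz
  rw [norm_Gamma_add_nat hz']
  refine le_mul_of_one_le_left (norm_nonneg _) (Finset.one_le_prod fun j _ ↦ ?_)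
  exact hz.trans ((by simp : |z.im| = |(z + j).im|).le.trans (abs_im_le_norm _))

theorem norm_Gamma_add_nat_le {z : ℂ} (hz : ∀ m : ℕ, z ≠ -m) (n : ℕ) :
    ‖Gamma (z + n)‖ ≤ (‖z‖ + n) ^ n * ‖Gamma z‖ := by
  rw [norm_Gamma_add_nat hz]
  refine mul_le_mul_of_nonneg_right ?_ (norm_nonneg _)
  calc ∏ j ∈ Finset.range n, ‖z + j‖ ≤ ∏ _j ∈ Finset.range n, (‖z‖ + n) := by
        refine Finset.prod_le_prod (fun _ _ ↦ norm_nonneg _) fun j hj ↦ ?_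
        have hjn : (j : ℝ) ≤ n := by exact_mod_cast (Finset.mem_range.1 hj).le
        exact (norm_add_le _ _).trans (by rw [norm_natCast]; gcongr)
    _ = (‖z‖ + n) ^ n := by simp

theorem norm_Gamma_add_ofReal_le {z : ℂ} (hz : 1 ≤ |z.im|) {δ : ℝ} {n m : ℕ}
    (hn : 2 ≤ z.re + δ + n) (hm : δ + n ≤ m) :
    ‖Gamma (z + δ)‖ ≤ (‖z‖ + m) ^ m * ‖Gamma z‖ := by
  have hz' : ∀ k : ℕ, z ≠ -k := fun k h ↦ by norm_num [h] at hz
  calc ‖Gamma (z + δ)‖ ≤ ‖Gamma (z + δ + n)‖ := norm_Gamma_le_norm_Gamma_add_nat (by simpa) n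
    _ ≤ ‖Gamma (z + δ + n + (m - δ - n : ℝ))‖ :=
        norm_Gamma_le_norm_Gamma_add_ofReal (by simpa) (by linarith)
    _ = ‖Gamma (z + m)‖ := by push_cast; ring_nf
    _ ≤ (‖z‖ + m) ^ m * ‖Gamma z‖ := norm_Gamma_add_nat_le hz' m

theorem norm_Gamma_conj (z : ℂ) : ‖Gamma (conj z)‖ = ‖Gamma z‖ := by
  rw [Gamma_conj, norm_conj]

end Complex

theorem gamma_quotient_poly_bound (A B : ℝ) (t : ℝ) (c : ℝ) (hc : 0 ≤ c) :
    ∃ C : ℝ, 0 < C ∧ ∃ N : ℕ, ∃ T : ℝ, 0 < T ∧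
      ∀ s : ℂ, A ≤ s.re → s.re ≤ B → T ≤ |s.im| →
        ‖Complex.Gamma ((1 - s - t * Complex.I + c) / 2)‖ ≤
          C * (1 + ‖s‖) ^ N * ‖Complex.Gamma ((s + t * Complex.I + c) / 2)‖ := by
  set n := ⌈(3 + B) / 2⌉₊
  set m := ⌈n + 1 / 2 - A⌉₊
  refine ⟨(1 + |t| + c + m) ^ m, by positivity, m, 2 + 2 * |t|, by positivity,
    fun s hAs hsB hT ↦ ?_⟩
  set z : ℂ := (s + t * I + c) / 2 with hz
  have hconj : conj ((1 - s - t * I + c) / 2) = z + (1 / 2 - s.re : ℝ) := by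
    apply Complex.ext
    · simp [hz, map_ofNat, div_ofNat_re]; ring
    · simp [hz, map_ofNat, div_ofNat_im]
  have hzre : z.re = (s.re + c) / 2 := by simp [hz]
  have hzim : 1 ≤ |z.im| := by
    have : z.im = (s.im + t) / 2 := by simp [hz]
    rw [this, abs_div, abs_two]
    have hsub : |s.im| ≤ |s.im + t| + |t| := by simpa using abs_sub_abs_le_abs_sub s.im (-t)
    linarith [abs_nonneg t]
  have hshift := norm_Gamma_add_ofReal_le hzim (δ := 1 / 2 - s.re) (n := n) (m := m)
    (by rw [hzre]; linarith [Nat.le_ceil ((3 + B) / 2)])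
    (by linarith [Nat.le_ceil (n + 1 / 2 - A)])
  have hpoly : ‖z‖ + m ≤ (1 + |t| + c + m) * (1 + ‖s‖) := by
    have : ‖z‖ ≤ ‖s‖ + |t| + c := by
      calc ‖z‖ ≤ ‖s + t * I + c‖ := by simp [hz]
        _ ≤ ‖s‖ + ‖(t : ℂ) * I‖ + ‖(c : ℂ)‖ := norm_add₃_le
        _ = ‖s‖ + |t| + c := by simp [abs_of_nonneg hc]
    nlinarith [norm_nonneg s, abs_nonneg t, (Nat.cast_nonneg m : (0 : ℝ) ≤ m)]
  rw [← norm_Gamma_conj, hconj]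
  calc _ ≤ (‖z‖ + m) ^ m * ‖Gamma z‖ := hshift
    _ ≤ ((1 + |t| + c + m) * (1 + ‖s‖)) ^ m * ‖Gamma z‖ := by gcongr
    _ = _ := by rw [mul_pow]
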